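/- Let V be a nonzero finite-dimensional ℂ-vector space carrying a Q-deformed sl_m-current representation. Then there exists a nonzero vector v₀ ∈ V such that X⁺_{i,t} v₀ = 0 for all i ∈ {1,…,m−1} and all t ∈ ℕ, and for each i ∈ {1,…,m−1} and t ∈ ℕ there exists u_{i,t} ∈ ℂ with J_{i,t} v₀ = u_{i,t}·v₀. -/

import Mathlib

open Finset

/-- The Cartan integers `a_{ji}` of `sl_m`: `2` if `j = i`, `−1` if `|j − i| = 1`, `0` otherwise. -/
def cartan {m : ℕ} (j i : Fin (m - 1)) : ℂ :=
  if j = i then 2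
  else if (j : ℕ) = (i : ℕ) + 1 ∨ (i : ℕ) = (j : ℕ) + 1 then -1 else 0

/-- A `Q`-deformed `sl_m`-current representation on a `ℂ`-vector space `V`:
the relations (L1)–(L6). -/
def IsSlmCurrentRep (m : ℕ) (Q : Fin (m - 1) → ℂ) {V : Type*} [AddCommGroup V] [Module ℂ V]
    (Xp Xm J : Fin (m - 1) → ℕ → Module.End ℂ V) : Prop :=
  (∀ (i j : Fin (m - 1)) (s t : ℕ), J i s * J j t = J j t * J i s) ∧
  (∀ (i j : Fin (m - 1)) (s t : ℕ),
      J j s * Xp i t - Xp i t * J j s = cartan j i • Xp i (s + t)) ∧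
  (∀ (i j : Fin (m - 1)) (s t : ℕ),
      J j s * Xm i t - Xm i t * J j s = -(cartan j i • Xm i (s + t))) ∧
  (∀ (i j : Fin (m - 1)) (s t : ℕ), Xp i t * Xm j s - Xm j s * Xp i t =
      if i = j then J i (s + t) - Q i • J i (s + t + 1) else 0) ∧
  (∀ (i j : Fin (m - 1)) (s t : ℕ), ¬((j : ℕ) = (i : ℕ) + 1 ∨ (i : ℕ) = (j : ℕ) + 1) →
      Xp i t * Xp j s = Xp j s * Xp i t ∧ Xm i t * Xm j s = Xm j s * Xm i t) ∧
  (∀ (i j : Fin (m - 1)) (s t : ℕ), ((j : ℕ) = (i : ℕ) + 1 ∨ (i : ℕ) = (j : ℕ) + 1) →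
      (Xp i (t + 1) * Xp j s - Xp j s * Xp i (t + 1) =
        Xp i t * Xp j (s + 1) - Xp j (s + 1) * Xp i t) ∧
      (Xm i (t + 1) * Xm j s - Xm j s * Xm i (t + 1) =
        Xm i t * Xm j (s + 1) - Xm j (s + 1) * Xm i t)) ∧
  (∀ (i j : Fin (m - 1)) (s t u : ℕ), ((j : ℕ) = (i : ℕ) + 1 ∨ (i : ℕ) = (j : ℕ) + 1) →
      Xp i s * (Xp i t * Xp j u - Xp j u * Xp i t) -
          (Xp i t * Xp j u - Xp j u * Xp i t) * Xp i s = 0 ∧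
      Xm i s * (Xm i t * Xm j u - Xm j u * Xm i t) -
          (Xm i t * Xm j u - Xm j u * Xm i t) * Xm i s = 0)

/-!
Let `H := ∑ⱼ (2ρ)ⱼ J_{j,0}`, where `2ρ = ∑ⱼ (j+1)(m-j-1) αⱼ` is the sum of the positive roots of
`sl_m`. By (L1) and (L2), `H` commutes with every `J_{i,t}` and `[H, X⁺_{i,t}] = 2 X⁺_{i,t}`,
because `∑ⱼ (2ρ)ⱼ a_{ji} = 2`. So if `μ` is an eigenvalue of `H` of maximal real part,
each `X⁺_{i,t}` maps the `μ`-eigenspace of `H` into the zero `(μ+2)`-eigenspace, while the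
commuting family `J_{i,t}` preserves it and has a common eigenvector `v₀` in it.
-/

namespace Module.End

variable {K V : Type*} [Field K] [AddCommGroup V] [Module K V]

lemma mapsTo_eigenspace_add_of_mul_sub_mul_eq_smul {H X : End K V} {c : K}
    (h : H * X - X * H = c • X) (μ : K) :
    Set.MapsTo X (H.eigenspace μ) (H.eigenspace (μ + c)) := by
  intro v hv
  rw [SetLike.mem_coe, mem_eigenspace_iff] at hv ⊢
  have hv' : (H * X) v = (X * H) v + (c • X) v := by
    rw [← h, LinearMap.sub_apply]; abel
  simp only [mul_apply, hv, map_smul] at hv'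
  rw [hv', add_smul, LinearMap.smul_apply]

lemma apply_eq_zero_of_mem_eigenspace_of_not_hasEigenvalue {H X : End K V} {c μ : K}
    (h : H * X - X * H = c • X) (hμc : ¬H.HasEigenvalue (μ + c)) {v : V}
    (hv : v ∈ H.eigenspace μ) : X v = 0 := by
  by_contra hXv
  exact hμc (hasEigenvalue_of_hasEigenvector
    ⟨mapsTo_eigenspace_add_of_mul_sub_mul_eq_smul h μ hv, hXv⟩)

lemma exists_mem_ne_zero_forall_eigenvector [IsAlgClosed K] [FiniteDimensional K V] {ι : Type*}
    (F : ι → End K V) (hF : ∀ i j, Commute (F i) (F j)) (p : Submodule K V) (hp : p ≠ ⊥)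
    (hFp : ∀ i, ∀ v ∈ p, F i v ∈ p) :
    ∃ v ∈ p, v ≠ 0 ∧ ∀ i, ∃ u : K, F i v = u • v := by
  induction hn : Module.finrank K p using Nat.strong_induction_on generalizing p with
  | _ n ih =>
  by_cases hscalar : ∀ i, ∃ u : K, ∀ v ∈ p, F i v = u • v
  · obtain ⟨v, hvp, hv0⟩ := p.ne_bot_iff.mp hp
    exact ⟨v, hvp, hv0, fun i => (hscalar i).imp fun u hu => hu v hvp⟩
  push Not at hscalar
  obtain ⟨i₀, hi₀⟩ := hscalar
  have : Nontrivial p := Submodule.nontrivial_iff_ne_bot.mpr hp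
  obtain ⟨μ, hμ⟩ := exists_eigenvalue ((F i₀).restrict (hFp i₀))
  obtain ⟨w, hw, hw0⟩ := hμ.exists_hasEigenvector
  let q := p ⊓ (F i₀).eigenspace μ
  have hwq : (w : V) ∈ q :=
    ⟨w.2, eigenspace_restrict_le_eigenspace (F i₀) (hFp i₀) μ ⟨w, hw, rfl⟩⟩
  have hqp : q < p := by
    refine lt_of_le_of_ne inf_le_left fun hq => ?_
    obtain ⟨v, hvp, hv⟩ := hi₀ μ
    exact hv (mem_eigenspace_iff.mp (hq ▸ hvp : v ∈ q).2)
  have hFq : ∀ i, ∀ v ∈ q, F i v ∈ q := fun i v hv =>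
    ⟨hFp i v hv.1, mapsTo_genEigenspace_of_comm (hF i₀ i) μ 1 hv.2⟩
  obtain ⟨v, hvq, hv⟩ := ih _ (hn ▸ Submodule.finrank_lt_finrank_of_lt hqp) q
    (q.ne_bot_iff.mpr ⟨w, hwq, by simpa using hw0⟩) hFq rfl
  exact ⟨v, hvq.1, hv⟩

lemma exists_hasEigenvalue_forall_not_hasEigenvalue_add {V : Type*} [AddCommGroup V]
    [Module ℂ V] [FiniteDimensional ℂ V] [Nontrivial V] (H : End ℂ V) :
    ∃ μ, H.HasEigenvalue μ ∧ ∀ c : ℂ, 0 < c.re → ¬H.HasEigenvalue (μ + c) := by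
  obtain ⟨μ, hμ, hmax⟩ :=
    Set.exists_max_image _ Complex.re H.finite_hasEigenvalue H.exists_eigenvalue
  refine ⟨μ, hμ, fun c hc hμc => ?_⟩
  have := hmax _ hμc
  simp only [Complex.add_re] at this
  linarith

end Module.End

lemma sum_mul_cartan {m : ℕ} (f : ℕ → ℂ) (hf₀ : f 0 = 0) (hfm : f m = 0) (i : Fin (m - 1)) :
    ∑ j : Fin (m - 1), f (j + 1) * cartan j i = 2 * f (i + 1) - f i - f (i + 2) := by
  have hcartan : ∀ j : Fin (m - 1), cartan j i = (if (j : ℕ) = i then 2 else 0) -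
      (if (j : ℕ) = i + 1 then 1 else 0) - (if (j : ℕ) + 1 = i then 1 else 0) := by
    intro j
    simp only [cartan, Fin.ext_iff]
    split_ifs <;> first | omega | norm_num
  simp only [hcartan, mul_sub, mul_ite, mul_zero, mul_one, Finset.sum_sub_distrib]
  rw [Fin.sum_univ_eq_sum_range (fun k => if k = (i : ℕ) then f (k + 1) * 2 else 0),
    Fin.sum_univ_eq_sum_range (fun k => if k = (i : ℕ) + 1 then f (k + 1) else 0),
    Fin.sum_univ_eq_sum_range (fun k => if k + 1 = (i : ℕ) then f (k + 1) else 0)]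
  obtain ⟨i, hi⟩ := i
  have hdiag : ∑ k ∈ range (m - 1), (if k = i then f (k + 1) * 2 else 0) = f (i + 1) * 2 := by
    simp [hi]
  have hsucc : ∑ k ∈ range (m - 1), (if k = i + 1 then f (k + 1) else 0) = f (i + 2) := by
    rw [Finset.sum_ite_eq']
    split_ifs with h
    · rfl
    · rw [Finset.mem_range] at h
      rw [show i + 2 = m by omega, hfm]
  have hpred : ∑ k ∈ range (m - 1), (if k + 1 = i then f (k + 1) else 0) = f i := by
    rcases i with _ | i
    · simp [hf₀]
    · simp only [add_left_inj, Finset.sum_ite_eq', Finset.mem_range]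
      exact if_pos (by omega)
  rw [hdiag, hsucc, hpred]
  ring

def twoRho (m : ℕ) (j : Fin (m - 1)) : ℂ :=
  ((j : ℂ) + 1) * (m - ((j : ℂ) + 1))

lemma sum_twoRho_mul_cartan {m : ℕ} (i : Fin (m - 1)) :
    ∑ j : Fin (m - 1), twoRho m j * cartan j i = 2 := by
  have := sum_mul_cartan (m := m) (fun k => (k : ℂ) * (m - k)) (by simp) (by simp) i
  simp only [Nat.cast_add, Nat.cast_one, Nat.cast_ofNat] at this
  exact this.trans (by ring)

def weightGrading {m : ℕ} {V : Type*} [AddCommGroup V] [Module ℂ V]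
    (J : Fin (m - 1) → ℕ → Module.End ℂ V) : Module.End ℂ V :=
  ∑ j, twoRho m j • J j 0

namespace IsSlmCurrentRep

variable {m : ℕ} {Q : Fin (m - 1) → ℂ} {V : Type*} [AddCommGroup V] [Module ℂ V]
  {Xp Xm J : Fin (m - 1) → ℕ → Module.End ℂ V}

lemma weightGrading_mul_sub_mul_Xp (hrep : IsSlmCurrentRep m Q Xp Xm J) (i : Fin (m - 1))
    (t : ℕ) : weightGrading J * Xp i t - Xp i t * weightGrading J = (2 : ℂ) • Xp i t := by
  simp only [weightGrading, Finset.sum_mul, Finset.mul_sum, ← Finset.sum_sub_distrib,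
    smul_mul_assoc, mul_smul_comm, ← smul_sub, hrep.2.1 i _ 0 t, zero_add, smul_smul,
    ← Finset.sum_smul, sum_twoRho_mul_cartan]

lemma commute_weightGrading_J (hrep : IsSlmCurrentRep m Q Xp Xm J) (i : Fin (m - 1)) (t : ℕ) :
    Commute (weightGrading J) (J i t) :=
  Commute.sum_left _ _ _ fun j _ => Commute.smul_left (hrep.1 j i 0 t) _

end IsSlmCurrentRep

theorem stmt13 {m : ℕ} (Q : Fin (m - 1) → ℂ)
    {V : Type*} [AddCommGroup V] [Module ℂ V] [FiniteDimensional ℂ V] [Nontrivial V]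
    (Xp Xm J : Fin (m - 1) → ℕ → Module.End ℂ V)
    (hrep : IsSlmCurrentRep m Q Xp Xm J) :
    ∃ v₀ : V, v₀ ≠ 0 ∧ (∀ i t, Xp i t v₀ = 0) ∧
      ∀ i t, ∃ u : ℂ, J i t v₀ = u • v₀ := by
  obtain ⟨μ, hμ, hμ_max⟩ := (weightGrading J).exists_hasEigenvalue_forall_not_hasEigenvalue_add
  obtain ⟨v, hvμ, hv0, hvJ⟩ := Module.End.exists_mem_ne_zero_forall_eigenvector
    (fun p : Fin (m - 1) × ℕ => J p.1 p.2) (fun p q => hrep.1 p.1 q.1 p.2 q.2) _ hμ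
    fun p => Module.End.mapsTo_genEigenspace_of_comm (hrep.commute_weightGrading_J p.1 p.2) μ 1
  refine ⟨v, hv0, fun i t => ?_, fun i t => hvJ (i, t)⟩
  exact Module.End.apply_eq_zero_of_mem_eigenspace_of_not_hasEigenvalue
    (hrep.weightGrading_mul_sub_mul_Xp i t) (hμ_max 2 (by norm_num)) hvμ
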